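/- For a deterministic unary two-way automaton with broadcasting states B ⊆ Q and a fixed state s, the set Mute = {(N, p) : starting from configuration (s, p) on tape {0,…,N+1}, the automaton never enters a state of B} is Presburger-definable in (N, p), for N exceeding all amplitudes. -/

import Mathlib

/-- Tape symbols: left endmarker, the unary letter, right endmarker. -/
inductive TapeSym : Type
  | lmark | a | rmark

/-- A linear subset of ℕᵏ. -/
def IsLinearSet' {k : ℕ} (S : Set (Fin k → ℕ)) : Prop :=
  ∃ (m : ℕ) (a : Fin k → ℕ) (b : Fin m → Fin k → ℕ),
    S = {v | ∃ c : Fin m → ℕ, v = a + ∑ j, c j • b j}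

/-- A semilinear (equivalently, Presburger-definable) subset of ℕᵏ. -/
def IsSemilinearSet' {k : ℕ} (S : Set (Fin k → ℕ)) : Prop :=
  ∃ (m : ℕ) (f : Fin m → Set (Fin k → ℕ)),
    (∀ i, IsLinearSet' (f i)) ∧ S = ⋃ i, f i

/-- Eventually periodic subset of ℕ. -/
def EventuallyPeriodic (L : Set ℕ) : Prop :=
  ∃ n₀ p : ℕ, 1 ≤ p ∧ ∀ n, n₀ ≤ n → (n ∈ L ↔ n + p ∈ L)

/-- The unary language {aⁿ : n ∈ L} is regular. -/
def UnaryRegular (L : Set ℕ) : Prop :=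
  ∃ (σ : Type) (_ : Fintype σ) (dfa : DFA Unit σ),
    ∀ n : ℕ, List.replicate n () ∈ dfa.accepts ↔ n ∈ L

/-- The symbol scanned at position `p` on the tape `{0, …, N+1}`. -/
def symAt (N : ℕ) (p : ℤ) : TapeSym :=
  if p ≤ 0 then TapeSym.lmark else if (N : ℤ) + 1 ≤ p then TapeSym.rmark else TapeSym.a

/-- One step of a deterministic two-way unary automaton on the tape `{0, …, N+1}`. -/
def tstep {Q : Type} (δ : Q → TapeSym → Q × ℤ) (N : ℕ) (c : Q × ℤ) : Q × ℤ :=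
  ((δ c.1 (symAt N c.2)).1, c.2 + (δ c.1 (symAt N c.2)).2)

/-- The run after `t` steps from configuration `(s, p)` on the tape `{0, …, N+1}`. -/
def trun {Q : Type} (δ : Q → TapeSym → Q × ℤ) (N : ℕ) (s : Q) (p : ℤ) (t : ℕ) : Q × ℤ :=
  (tstep δ N)^[t] (s, p)

/-- One step of the free run (two-way infinite unary tape, no endmarkers). -/
def freeStep {Q : Type} (δa : Q → Q × ℤ) (c : Q × ℤ) : Q × ℤ :=
  ((δa c.1).1, c.2 + (δa c.1).2)

/-- The free run from state `s` (displacement measured from the start). -/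
def freeRun {Q : Type} (δa : Q → Q × ℤ) (s : Q) (t : ℕ) : Q × ℤ :=
  (freeStep δa)^[t] (s, 0)

/-- The amplitude of a state `s`: the width of the range of displacements along
the first loop of its free run (which is contained in the first `|Q| + 1` steps). -/
noncomputable def amplitude {Q : Type} [Fintype Q] (δa : Q → Q × ℤ) (s : Q) : ℤ :=
  ((Finset.range (Fintype.card Q + 1)).image fun i => (freeRun δa s i).2).max'
      (by simp [Finset.nonempty_range_iff]) -
  ((Finset.range (Fintype.card Q + 1)).image fun i => (freeRun δa s i).2).min'
      (by simp [Finset.nonempty_range_iff])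

/-!
A run on the tape `{0, …, N+1}` splits into legs, maximal stretches on which the scanned symbol
`σ` does not change; during a leg the automaton performs the free run of `δ · σ`. A free run with
unit steps repeats a state within its first `|Q|` steps, after which its position moves by a drift
`d`, `|d| ≤ |Q|`, per cycle. So the way it leaves a window `(-u, v)` (exit state, side, and the
states seen before) does not change when `v > |Q|` moves by a multiple of `|Q|!`: if `d ≤ 0`, or if
the run leaves on the left within `|Q|` steps, it never comes near `v`; otherwise it first reaches
level `v` in a state that depends only on `v mod d`. By symmetry the same holds for `u`. Writing
`a ≈ b` when `a = b`, or `a, b > |Q|` and `a ≡ b [MOD |Q|!]`, the runs from `(s, p)` on `N` and from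
`(s, p')` on `N'` therefore visit the same states as soon as `N ≈ N'`, `p ≈ p'` and
`N + 1 - p ≈ N' + 1 - p'`. Thus Mute is periodic in both distances to the endmarkers, and such a
subset of `ℕ²` is a finite union of linear sets.
-/

open Set Nat Pointwise

namespace TwoWayUnary

variable {Q : Type}

def ModEqFrom (T P a b : ℕ) : Prop := a = b ∨ T ≤ a ∧ T ≤ b ∧ a ≡ b [MOD P]

namespace ModEqFrom

variable {T P a b c d : ℕ}

theorem refl (a : ℕ) : ModEqFrom T P a a := Or.inl rfl

theorem symm (h : ModEqFrom T P a b) : ModEqFrom T P b a :=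
  h.imp Eq.symm fun ⟨ha, hb, h⟩ => ⟨hb, ha, h.symm⟩

theorem add (h₁ : ModEqFrom T P a b) (h₂ : ModEqFrom T P c d) :
    ModEqFrom T P (a + c) (b + d) := by
  rcases h₁ with rfl | ⟨ha, hb, h₁⟩
  · rcases h₂ with rfl | ⟨hc, hd, h₂⟩
    · exact refl _
    · exact Or.inr ⟨by omega, by omega, h₂.add_left a⟩
  · refine Or.inr ⟨by omega, by omega, h₁.add ?_⟩
    rcases h₂ with rfl | ⟨-, -, h₂⟩
    exacts [Nat.ModEq.refl c, h₂]

theorem self_add (h : T ≤ a) : ModEqFrom T P a (a + P) :=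
  Or.inr ⟨h, by omega, (Nat.add_mod_right a P).symm⟩

theorem eq_zero_iff (hT : 0 < T) (h : ModEqFrom T P a b) : a = 0 ↔ b = 0 := by
  rcases h with rfl | ⟨ha, hb, -⟩ <;> omega

end ModEqFrom

section FreeRun

variable (f : Q → Q × ℤ) (q : Q)

theorem freeRun_zero : freeRun f q 0 = (q, 0) := rfl

theorem freeRun_succ (t : ℕ) : freeRun f q (t + 1) = freeStep f (freeRun f q t) :=
  Function.iterate_succ_apply' _ _ _

theorem freeStep_iterate (c : Q × ℤ) (t : ℕ) :
    (freeStep f)^[t] c = ((freeRun f c.1 t).1, c.2 + (freeRun f c.1 t).2) := by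
  induction t with
  | zero => simp [freeRun_zero]
  | succ t ih =>
    rw [Function.iterate_succ_apply', ih, freeRun_succ]
    simp only [freeStep, add_assoc]

theorem freeRun_add (m n : ℕ) :
    freeRun f q (m + n) =
      ((freeRun f (freeRun f q m).1 n).1, (freeRun f q m).2 + (freeRun f (freeRun f q m).1 n).2) := by
  rw [freeRun, add_comm, Function.iterate_add_apply, ← freeRun, freeStep_iterate]

def drift (i r : ℕ) : ℤ := (freeRun f q (i + r)).2 - (freeRun f q i).2

section UnitSteps

variable {f} (hf : ∀ q, |(f q).2| ≤ 1)
include hf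

theorem abs_freeRun_succ_sub (t : ℕ) : |(freeRun f q (t + 1)).2 - (freeRun f q t).2| ≤ 1 := by
  rw [freeRun_succ]
  simpa [freeStep] using hf _

theorem abs_freeRun_le (t : ℕ) : |(freeRun f q t).2| ≤ t := by
  induction t with
  | zero => simp [freeRun_zero]
  | succ t ih =>
    have := abs_freeRun_succ_sub q hf t
    rw [abs_le] at *
    push_cast
    constructor <;> linarith

theorem drift_le (i r : ℕ) : drift f q i r ≤ r := by
  have := abs_freeRun_le (freeRun f q i).1 hf r
  rw [drift, freeRun_add]
  simp only [add_sub_cancel_left]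
  exact (le_abs_self _).trans this

end UnitSteps

theorem exists_cycle [Fintype Q] :
    ∃ i r, 0 < r ∧ i + r ≤ Fintype.card Q ∧ (freeRun f q (i + r)).1 = (freeRun f q i).1 := by
  obtain ⟨x, y, hxy, he⟩ := Fintype.exists_ne_map_eq_of_card_lt
    (fun t : Fin (Fintype.card Q + 1) => (freeRun f q t).1) (by simp)
  rcases lt_or_gt_of_ne (Fin.val_injective.ne hxy) with h | h
  · exact ⟨x, y - x, by omega, by omega, by rw [Nat.add_sub_cancel' h.le]; exact he.symm⟩
  · exact ⟨y, x - y, by omega, by omega, by rw [Nat.add_sub_cancel' h.le]; exact he⟩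

section Cycle

variable {f q} {i r : ℕ} (hc : (freeRun f q (i + r)).1 = (freeRun f q i).1)
include hc

theorem freeRun_add_period {t : ℕ} (ht : i ≤ t) :
    freeRun f q (t + r) = ((freeRun f q t).1, (freeRun f q t).2 + drift f q i r) := by
  obtain ⟨k, rfl⟩ := Nat.exists_eq_add_of_le ht
  rw [show i + k + r = i + r + k by ring, freeRun_add f q (i + r) k, hc, freeRun_add f q i k, drift]
  ext <;> simp only
  ring

theorem freeRun_add_mul_period {t : ℕ} (ht : i ≤ t) (n : ℕ) :
    freeRun f q (t + n * r) = ((freeRun f q t).1, (freeRun f q t).2 + n * drift f q i r) := by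
  induction n with
  | zero => simp
  | succ n ih =>
    rw [show t + (n + 1) * r = t + n * r + r by ring, freeRun_add_period hc (by omega), ih]
    ext <;> simp only
    push_cast
    ring

theorem exists_freeRun_eq_add_mul_drift (hr : 0 < r) (t : ℕ) :
    ∃ t₀ < i + r, ∃ n : ℕ,
      freeRun f q t = ((freeRun f q t₀).1, (freeRun f q t₀).2 + n * drift f q i r) := by
  by_cases ht : t < i + r
  · exact ⟨t, ht, 0, by simp⟩
  refine ⟨i + (t - i) % r, by have := Nat.mod_lt (t - i) hr; omega, (t - i) / r, ?_⟩
  rw [← freeRun_add_mul_period hc (by omega)]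
  congr 1
  have := Nat.mod_add_div (t - i) r
  rw [mul_comm] at this
  omega

theorem exists_le_freeRun (hD : 0 < drift f q i r) (w : ℤ) : ∃ t, w ≤ (freeRun f q t).2 := by
  refine ⟨i + (w - (freeRun f q i).2).toNat * r, ?_⟩
  rw [freeRun_add_mul_period hc le_rfl]
  have := Int.self_le_toNat (w - (freeRun f q i).2)
  nlinarith

end Cycle

end FreeRun

section Exit

variable (f : Q → Q × ℤ) (q : Q) (W : Set ℤ)

open Classical in
noncomputable def exitConfig : Option (Q × ℤ) :=
  if h : ∃ t, (freeRun f q t).2 ∉ W then some (freeRun f q (Nat.find h)) else none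

def statesUntilExit : Set Q :=
  {q' | ∃ t, (∀ s < t, (freeRun f q s).2 ∈ W) ∧ (freeRun f q t).1 = q'}

/-- The side of the exit is recorded as the sign of its position. -/
noncomputable def exitProfile : Set Q × Option (Q × ℤ) :=
  (statesUntilExit f q W, (exitConfig f q W).map fun c => (c.1, c.2.sign))

variable {f q W}

theorem exitConfig_eq_some_iff {c : Q × ℤ} :
    exitConfig f q W = some c ↔
      ∃ t, (∀ s < t, (freeRun f q s).2 ∈ W) ∧ (freeRun f q t).2 ∉ W ∧ freeRun f q t = c := by
  classical
  unfold exitConfig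
  split_ifs with h
  · rw [Option.some_inj]
    constructor
    · rintro rfl
      exact ⟨_, fun s hs => not_not.1 (Nat.find_min h hs), Nat.find_spec h, rfl⟩
    · rintro ⟨t, hin, hout, rfl⟩
      congr
      refine le_antisymm (Nat.find_min' h hout) (not_lt.1 fun hlt => ?_)
      exact Nat.find_spec h (hin _ hlt)
  · simp only [false_iff, not_exists, not_and]
    exact fun t _ hout => (h ⟨t, hout⟩).elim

theorem exists_exitConfig_eq_some {t : ℕ} (ht : (freeRun f q t).2 ∉ W) :
    ∃ m ≤ t, (∀ s < m, (freeRun f q s).2 ∈ W) ∧ (freeRun f q m).2 ∉ W ∧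
      exitConfig f q W = some (freeRun f q m) := by
  classical
  have h : ∃ t, (freeRun f q t).2 ∉ W := ⟨t, ht⟩
  refine ⟨Nat.find h, Nat.find_min' h ht, fun s hs => not_not.1 (Nat.find_min h hs),
    Nat.find_spec h, ?_⟩
  rw [exitConfig, dif_pos h]

theorem exitProfile_congr {W' : Set ℤ}
    (h : ∀ t, (∀ s < t, (freeRun f q s).2 ∈ W) →
      ((freeRun f q t).2 ∈ W ↔ (freeRun f q t).2 ∈ W')) :
    exitProfile f q W = exitProfile f q W' := by
  have hpre : ∀ t, (∀ s < t, (freeRun f q s).2 ∈ W) ↔ (∀ s < t, (freeRun f q s).2 ∈ W') := by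
    intro t
    induction t with
    | zero => simp
    | succ t ih =>
      rw [Nat.forall_lt_succ_right, Nat.forall_lt_succ_right]
      exact ⟨fun ⟨h₁, h₂⟩ => ⟨ih.1 h₁, (h t h₁).1 h₂⟩,
        fun ⟨h₁, h₂⟩ => ⟨ih.2 h₁, (h t (ih.2 h₁)).2 h₂⟩⟩
  have hexit : exitConfig f q W = exitConfig f q W' := by
    refine Option.ext fun c => ?_
    simp only [exitConfig_eq_some_iff]
    refine exists_congr fun t => ⟨fun ⟨h₁, h₂, h₃⟩ => ⟨(hpre t).1 h₁, ?_, h₃⟩,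
      fun ⟨h₁, h₂, h₃⟩ => ⟨(hpre t).2 h₁, ?_, h₃⟩⟩
    · rwa [← h t h₁]
    · rwa [h t ((hpre t).2 h₁)]
  simp only [exitProfile, statesUntilExit, hpre, hexit]

section UnitSteps

variable (hf : ∀ q, |(f q).2| ≤ 1) {c : Q × ℤ}
include hf

theorem exitConfig_adjacent (h0 : 0 ∈ W) (hc : exitConfig f q W = some c) :
    c.2 ∉ W ∧ ∃ z ∈ W, |c.2 - z| ≤ 1 := by
  obtain ⟨t, hin, hout, rfl⟩ := exitConfig_eq_some_iff.1 hc
  refine ⟨hout, ?_⟩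
  obtain _ | t := t
  · exact absurd h0 hout
  · exact ⟨_, hin t t.lt_succ_self, abs_freeRun_succ_sub q hf t⟩

theorem exitConfig_Iio (hw : 0 < w) (hc : exitConfig f q (Iio w) = some c) : c.2 = w := by
  obtain ⟨hout, z, hz, hzc⟩ := exitConfig_adjacent hf (by simpa using hw) hc
  simp only [mem_Iio, not_lt] at hout hz
  rw [abs_le] at hzc
  omega

theorem exitConfig_Iic (hc : exitConfig f q (Iic 0) = some c) : c.2 = 1 := by
  obtain ⟨hout, z, hz, hzc⟩ := exitConfig_adjacent hf (by simp) hc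
  simp only [mem_Iic, not_le] at hout hz
  rw [abs_le] at hzc
  omega

theorem exitConfig_Ici (hc : exitConfig f q (Ici 0) = some c) : c.2 = -1 := by
  obtain ⟨hout, z, hz, hzc⟩ := exitConfig_adjacent hf (by simp) hc
  simp only [mem_Ici, not_le] at hout hz
  rw [abs_le] at hzc
  omega

theorem exitConfig_Ioo {u v : ℤ} (hu : 0 < u) (hv : 0 < v) (hc : exitConfig f q (Ioo (-u) v) = some c) :
    c.2 = -u ∨ c.2 = v := by
  obtain ⟨hout, z, hz, hzc⟩ := exitConfig_adjacent hf (by simp [hu, hv]) hc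
  simp only [mem_Ioo, not_and_or, not_lt] at hout hz
  rw [abs_le] at hzc
  omega

end UnitSteps

end Exit

section Mirror

def mirror (f : Q → Q × ℤ) : Q → Q × ℤ := fun q => ((f q).1, -(f q).2)

variable (f : Q → Q × ℤ) (q : Q)

theorem mirror_mirror : mirror (mirror f) = f := by
  funext q
  simp [mirror]

theorem freeRun_mirror (t : ℕ) :
    freeRun (mirror f) q t = ((freeRun f q t).1, -(freeRun f q t).2) := by
  induction t with
  | zero => simp [freeRun_zero]
  | succ t ih =>
    rw [freeRun_succ, freeRun_succ, ih]
    simp only [freeStep, mirror, neg_add]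

theorem exitProfile_mirror (W : Set ℤ) :
    exitProfile (mirror f) q W =
      Prod.map id (Option.map fun c => (c.1, -c.2)) (exitProfile f q (Neg.neg ⁻¹' W)) := by
  have hexit : exitConfig (mirror f) q W =
      (exitConfig f q (Neg.neg ⁻¹' W)).map fun c => (c.1, -c.2) := by
    classical
    simp only [exitConfig, freeRun_mirror, Set.mem_preimage]
    split_ifs <;> rfl
  simp only [exitProfile, statesUntilExit, freeRun_mirror, Set.mem_preimage, hexit,
    Option.map_map, Prod.map, id, Function.comp_def, Int.sign_neg]

end Mirror

section Core

variable [Fintype Q] {f : Q → Q × ℤ} (hf : ∀ q, |(f q).2| ≤ 1) (q : Q)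
include hf

theorem abs_freeRun_le_card {t : ℕ} (ht : t ≤ Fintype.card Q) :
    |(freeRun f q t).2| ≤ Fintype.card Q :=
  (abs_freeRun_le q hf t).trans (by exact_mod_cast ht)

section Cycle

variable {q} {i r : ℕ} (hr : 0 < r) (hir : i + r ≤ Fintype.card Q)
  (hc : (freeRun f q (i + r)).1 = (freeRun f q i).1)
include hr hir hc

theorem freeRun_le_card_of_drift_nonpos (hD : drift f q i r ≤ 0) (t : ℕ) :
    (freeRun f q t).2 ≤ Fintype.card Q := by
  obtain ⟨t₀, ht₀, n, ht⟩ := exists_freeRun_eq_add_mul_drift hc hr t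
  have h₀ := abs_le.1 (abs_freeRun_le_card hf q (t := t₀) (by omega))
  have : (n : ℤ) * drift f q i r ≤ 0 := mul_nonpos_of_nonneg_of_nonpos (by positivity) hD
  rw [ht]
  linarith

theorem exitProfile_Iio_add_drift (hD : 0 < drift f q i r) {w : ℤ} (hw : Fintype.card Q < w) :
    exitProfile f q (Iio w) = exitProfile f q (Iio (w + drift f q i r)) := by
  have hsmall : ∀ t ≤ Fintype.card Q, (freeRun f q t).2 < w := fun t ht =>
    (le_abs_self _).trans_lt ((abs_freeRun_le_card hf q ht).trans_lt hw)
  -- every state of the run occurs before it first reaches `w`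
  have hstates : ∀ w', w ≤ w' → statesUntilExit f q (Iio w') = range fun t => (freeRun f q t).1 := by
    intro w' hw'
    refine Subset.antisymm (fun _ ⟨t, _, h⟩ => ⟨t, h⟩) ?_
    rintro _ ⟨t, rfl⟩
    obtain ⟨t₀, ht₀, n, ht⟩ := exists_freeRun_eq_add_mul_drift hc hr t
    exact ⟨t₀, fun s hs => (hsmall s (by omega)).trans_le hw', by simp only [ht]⟩
  have hw0 : 0 < w := hw.trans_le' (by positivity)
  obtain ⟨t, ht⟩ := exists_le_freeRun hc hD w
  obtain ⟨m, -, hin, hout, hexit⟩ := exists_exitConfig_eq_some (W := Iio w) (not_lt.2 ht)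
  have hm : (freeRun f q m).2 = w := exitConfig_Iio hf hw0 hexit
  have hmc : Fintype.card Q < m := by
    by_contra h
    exact hout (hsmall m (by omega))
  have hexit' : exitConfig f q (Iio (w + drift f q i r)) = some (freeRun f q (m + r)) := by
    refine exitConfig_eq_some_iff.2 ⟨m + r, fun s hs => ?_, ?_, rfl⟩
    · by_cases hsm : s < m
      · exact mem_Iio.2 ((mem_Iio.1 (hin s hsm)).trans (by linarith))
      · have hper := freeRun_add_period hc (t := s - r) (by omega)
        rw [Nat.sub_add_cancel (by omega)] at hper
        rw [mem_Iio, hper]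
        linarith [mem_Iio.1 (hin (s - r) (by omega))]
    · rw [freeRun_add_period hc (by omega), hm]
      simp
  simp only [exitProfile, hstates w le_rfl, hstates _ (le_add_of_nonneg_right hD.le), hexit, hexit',
    Option.map_some, freeRun_add_period hc (show i ≤ m by omega), hm,
    Int.sign_eq_one_of_pos hw0, Int.sign_eq_one_of_pos (add_pos hw0 hD)]

theorem exitProfile_Iio_eq_of_modEq (hD : 0 < drift f q i r) {v v' : ℕ}
    (hv : Fintype.card Q < v) (hvv' : v ≤ v') (hmod : v ≡ v' [MOD (Fintype.card Q)!]) :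
    exitProfile f q (Iio v) = exitProfile f q (Iio v') := by
  obtain ⟨k, hk⟩ : ∃ k : ℕ, (v' : ℤ) = v + k * drift f q i r := by
    have hdr : (drift f q i r).toNat ≤ Fintype.card Q := by
      have := drift_le q hf i r
      omega
    obtain ⟨k, hk⟩ := (Nat.dvd_factorial (by omega) hdr).trans ((Nat.modEq_iff_dvd' hvv').1 hmod)
    refine ⟨k, ?_⟩
    have : ((v' - v : ℕ) : ℤ) = ((drift f q i r).toNat * k : ℕ) := by rw [hk]
    push_cast [hvv', Int.toNat_of_nonneg hD.le] at this
    linarith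
  rw [hk]
  clear hk
  induction k with
  | zero => simp
  | succ k ih =>
    have : (Fintype.card Q : ℤ) < v + k * drift f q i r := by
      have : (Fintype.card Q : ℤ) < v := by exact_mod_cast hv
      have : 0 ≤ (k : ℤ) * drift f q i r := by positivity
      linarith
    rw [ih, exitProfile_Iio_add_drift hf hr hir hc hD this]
    push_cast
    ring_nf

end Cycle

theorem exitProfile_Ioo_eq_of_le {u v v' : ℕ} (hv : Fintype.card Q < v) (hvv' : v ≤ v')
    (hmod : v ≡ v' [MOD (Fintype.card Q)!]) :
    exitProfile f q (Ioo (-u) v) = exitProfile f q (Ioo (-u) v') := by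
  obtain ⟨i, r, hr, hir, hc⟩ := exists_cycle f q
  have hv' : (Fintype.card Q : ℤ) < v := by exact_mod_cast hv
  have hvv : (v : ℤ) ≤ v' := by exact_mod_cast hvv'
  rcases le_or_gt (drift f q i r) 0 with hD | hD
  · -- the run never climbs above its first `card Q` positions
    refine exitProfile_congr fun t _ => ?_
    have := freeRun_le_card_of_drift_nonpos hf hr hir hc hD t
    simp only [mem_Ioo]
    constructor <;> rintro ⟨h₁, h₂⟩ <;> exact ⟨h₁, by linarith⟩
  by_cases hleft : ∃ t ≤ Fintype.card Q, (freeRun f q t).2 ≤ -u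
  · -- the run leaves through `-u` before it can reach `v`
    obtain ⟨t₀, ht₀, hpos⟩ := hleft
    refine exitProfile_congr fun t hin => ?_
    have htt₀ : t ≤ t₀ := by
      by_contra h
      have := (hin t₀ (by omega)).1
      linarith
    have h₀ := abs_le.1 (abs_freeRun_le_card hf q (t := t) (by omega))
    simp only [mem_Ioo]
    constructor <;> rintro ⟨h₁, h₂⟩ <;> exact ⟨h₁, by linarith⟩
  push Not at hleft
  have hlow : ∀ t, -(u : ℤ) < (freeRun f q t).2 := by
    intro t
    obtain ⟨t₀, ht₀, n, ht⟩ := exists_freeRun_eq_add_mul_drift hc hr t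
    have : 0 ≤ (n : ℤ) * drift f q i r := by positivity
    rw [ht]
    linarith [hleft t₀ (by omega)]
  have hIoo : ∀ w : ℤ, exitProfile f q (Ioo (-u) w) = exitProfile f q (Iio w) :=
    fun w => exitProfile_congr fun t _ => by simp [hlow t]
  rw [hIoo, hIoo]
  exact exitProfile_Iio_eq_of_modEq hf hr hir hc hD hv hvv' hmod

theorem exitProfile_Ioo_congr_right {u v v' : ℕ}
    (h : ModEqFrom (Fintype.card Q + 1) (Fintype.card Q)! v v') :
    exitProfile f q (Ioo (-u) v) = exitProfile f q (Ioo (-u) v') := by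
  rcases h with rfl | ⟨hv, hv', hmod⟩
  · rfl
  rcases le_total v v' with hle | hle
  · exact exitProfile_Ioo_eq_of_le hf q hv hle hmod
  · exact (exitProfile_Ioo_eq_of_le hf q hv' hle hmod.symm).symm

theorem exitProfile_Ioo_congr {u u' v v' : ℕ}
    (hu : ModEqFrom (Fintype.card Q + 1) (Fintype.card Q)! u u')
    (hv : ModEqFrom (Fintype.card Q + 1) (Fintype.card Q)! v v') :
    exitProfile f q (Ioo (-u) v) = exitProfile f q (Ioo (-u') v') := by
  have hmirror : ∀ a b : ℕ, exitProfile f q (Ioo (-a) b) =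
      Prod.map id (Option.map fun c => (c.1, -c.2)) (exitProfile (mirror f) q (Ioo (-b) a)) := by
    intro a b
    have hneg : Neg.neg ⁻¹' Ioo (-(a : ℤ)) b = Ioo (-(b : ℤ)) a := by
      ext y
      simp only [mem_preimage, mem_Ioo]
      omega
    simpa only [mirror_mirror, hneg] using exitProfile_mirror (mirror f) q (Ioo (-(a : ℤ)) b)
  have hf' : ∀ q, |(mirror f q).2| ≤ 1 := by simpa [mirror] using hf
  rw [exitProfile_Ioo_congr_right hf q hv, hmirror, hmirror, exitProfile_Ioo_congr_right hf' q hu]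

end Core

section Tape

variable (δ : Q → TapeSym → Q × ℤ) (N : ℕ)

def window (x : ℤ) : Set ℤ := {y | symAt N (x + y) = symAt N x}

theorem iterate_tstep_eq {q : Q} {x : ℤ} {t : ℕ}
    (h : ∀ s < t, (freeRun (fun q => δ q (symAt N x)) q s).2 ∈ window N x) :
    (tstep δ N)^[t] (q, x) = ((freeRun (fun q => δ q (symAt N x)) q t).1,
      x + (freeRun (fun q => δ q (symAt N x)) q t).2) := by
  induction t with
  | zero => simp [freeRun_zero]
  | succ t ih =>
    rw [Function.iterate_succ_apply', ih fun s hs => h s (by omega), freeRun_succ]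
    have hsym : symAt N (x + (freeRun (fun q => δ q (symAt N x)) q t).2) = symAt N x :=
      h t (by omega)
    simp only [tstep, freeStep, hsym, add_assoc]

def visitedStates (c : Q × ℤ) : Set Q := range fun t => ((tstep δ N)^[t] c).1

theorem statesUntilExit_subset_visitedStates (q : Q) (x : ℤ) :
    statesUntilExit (fun q => δ q (symAt N x)) q (window N x) ⊆ visitedStates δ N (q, x) := by
  rintro _ ⟨t, ht, rfl⟩
  exact ⟨t, by simp only [iterate_tstep_eq δ N ht]⟩

theorem visitedStates_iterate_subset (c : Q × ℤ) (m : ℕ) :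
    visitedStates δ N ((tstep δ N)^[m] c) ⊆ visitedStates δ N c := by
  rintro _ ⟨t, rfl⟩
  exact ⟨t + m, by simp only [Function.iterate_add_apply]⟩

theorem window_zero : window N 0 = Iic 0 ∧ symAt N 0 = TapeSym.lmark := by
  refine ⟨?_, by simp [symAt]⟩
  ext y
  change symAt N (0 + y) = symAt N 0 ↔ y ≤ 0
  simp only [symAt]
  split_ifs <;> simp_all

theorem window_last : window N (N + 1) = Ici 0 ∧ symAt N (N + 1) = TapeSym.rmark := by
  refine ⟨?_, by simp [symAt]⟩
  ext y
  change symAt N (N + 1 + y) = symAt N (N + 1) ↔ 0 ≤ y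
  simp only [symAt]
  split_ifs <;> simp_all <;> omega

theorem window_of_pos {a b : ℕ} (ha : 0 < a) (hb : 0 < b) (hab : a + b = N + 1) :
    window N a = Ioo (-(a : ℤ)) b ∧ symAt N a = TapeSym.a := by
  have hab' : (a : ℤ) + b = N + 1 := by exact_mod_cast hab
  have hsym : symAt N a = TapeSym.a := by
    simp only [symAt]
    split_ifs <;> first | rfl | omega
  refine ⟨?_, hsym⟩
  ext y
  change symAt N (a + y) = symAt N a ↔ -(a : ℤ) < y ∧ y < b
  simp only [symAt]
  split_ifs <;> simp_all <;> omega

end Tape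

section Simulation

def Aligned (T P N N' : ℕ) (c c' : Q × ℤ) : Prop :=
  c.1 = c'.1 ∧ ∃ a b a' b' : ℕ, c.2 = a ∧ c'.2 = a' ∧ a + b = N + 1 ∧ a' + b' = N' + 1 ∧
    ModEqFrom T P a a' ∧ ModEqFrom T P b b'

theorem Aligned.symm {T P N N' : ℕ} {c c' : Q × ℤ} (h : Aligned T P N N' c c') :
    Aligned T P N' N c' c := by
  obtain ⟨hq, a, b, a', b', hx, hx', hab, hab', ha, hb⟩ := h
  exact ⟨hq.symm, a', b', a, b, hx', hx, hab', hab, ha.symm, hb.symm⟩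

variable [Fintype Q] {δ : Q → TapeSym → Q × ℤ} (hδ : ∀ q σ, |(δ q σ).2| ≤ 1) {N N' : ℕ}
include hδ

theorem Aligned.exitProfile_eq {q : Q} {x x' : ℤ}
    (hc : Aligned (Fintype.card Q + 1) (Fintype.card Q)! N N' (q, x) (q, x')) :
    symAt N' x' = symAt N x ∧
      exitProfile (fun q => δ q (symAt N x)) q (window N x) =
        exitProfile (fun q => δ q (symAt N x)) q (window N' x') := by
  obtain ⟨-, a, b, a', b', rfl, rfl, hab, hab', ha, hb⟩ := hc
  have hT : 0 < Fintype.card Q + 1 := Nat.succ_pos _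
  rcases Nat.eq_zero_or_pos a with rfl | ha0
  · obtain rfl : a' = 0 := (ha.eq_zero_iff hT).1 rfl
    simp only [Nat.cast_zero, (window_zero N).1, (window_zero N').1, (window_zero N).2,
      (window_zero N').2, and_self]
  rcases Nat.eq_zero_or_pos b with rfl | hb0
  · obtain rfl : b' = 0 := (hb.eq_zero_iff hT).1 rfl
    obtain rfl : a = N + 1 := by omega
    obtain rfl : a' = N' + 1 := by omega
    simp only [Nat.cast_add, Nat.cast_one, (window_last N).1, (window_last N').1,
      (window_last N).2, (window_last N').2, and_self]
  have ha0' : 0 < a' := Nat.pos_of_ne_zero fun h => ha0.ne' ((ha.eq_zero_iff hT).2 h)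
  have hb0' : 0 < b' := Nat.pos_of_ne_zero fun h => hb0.ne' ((hb.eq_zero_iff hT).2 h)
  obtain ⟨hW, hsym⟩ := window_of_pos N ha0 hb0 hab
  obtain ⟨hW', hsym'⟩ := window_of_pos N' ha0' hb0' hab'
  rw [hW, hW', hsym, hsym']
  exact ⟨rfl, exitProfile_Ioo_congr (hδ · TapeSym.a) q ha hb⟩

theorem Aligned.exit (hN : ModEqFrom (Fintype.card Q + 1) (Fintype.card Q)! N N') {q : Q} {x x' : ℤ} {e e' : Q × ℤ}
    (hc : Aligned (Fintype.card Q + 1) (Fintype.card Q)! N N' (q, x) (q, x'))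
    (he : exitConfig (fun q => δ q (symAt N x)) q (window N x) = some e)
    (he' : exitConfig (fun q => δ q (symAt N' x')) q (window N' x') = some e')
    (hsign : e.2.sign = e'.2.sign) :
    Aligned (Fintype.card Q + 1) (Fintype.card Q)! N N' (e.1, x + e.2) (e.1, x' + e'.2) := by
  obtain ⟨-, a, b, a', b', rfl, rfl, hab, hab', ha, hb⟩ := hc
  have hT : 0 < Fintype.card Q + 1 := Nat.succ_pos _
  rcases Nat.eq_zero_or_pos a with rfl | ha0
  · obtain rfl : a' = 0 := (ha.eq_zero_iff hT).1 rfl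
    simp only [Nat.cast_zero, (window_zero N).1, (window_zero N').1] at he he'
    have h := exitConfig_Iic (hδ · _) he
    have h' := exitConfig_Iic (hδ · _) he'
    exact ⟨rfl, 1, N, 1, N', by simp [h], by simp [h'], by omega, by omega, .refl 1, hN⟩
  rcases Nat.eq_zero_or_pos b with rfl | hb0
  · obtain rfl : b' = 0 := (hb.eq_zero_iff hT).1 rfl
    obtain rfl : a = N + 1 := by omega
    obtain rfl : a' = N' + 1 := by omega
    simp only [Nat.cast_add, Nat.cast_one, (window_last N).1, (window_last N').1] at he he'
    have h := exitConfig_Ici (hδ · _) he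
    have h' := exitConfig_Ici (hδ · _) he'
    exact ⟨rfl, N, 1, N', 1, by simp [h], by simp [h'], by omega, by omega, hN, .refl 1⟩
  have ha0' : 0 < a' := Nat.pos_of_ne_zero fun h => ha0.ne' ((ha.eq_zero_iff hT).2 h)
  have hb0' : 0 < b' := Nat.pos_of_ne_zero fun h => hb0.ne' ((hb.eq_zero_iff hT).2 h)
  rw [(window_of_pos N ha0 hb0 hab).1] at he
  rw [(window_of_pos N' ha0' hb0' hab').1] at he'
  rcases exitConfig_Ioo (hδ · _) (by omega) (by omega) he with h | h <;>
  rcases exitConfig_Ioo (hδ · _) (by omega) (by omega) he' with h' | h' <;>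
  simp only [h, h', Int.sign_neg, Int.sign_eq_one_of_pos (Nat.cast_pos.2 ha0),
    Int.sign_eq_one_of_pos (Nat.cast_pos.2 hb0), Int.sign_eq_one_of_pos (Nat.cast_pos.2 ha0'),
    Int.sign_eq_one_of_pos (Nat.cast_pos.2 hb0')] at hsign ⊢
  · exact ⟨rfl, 0, N + 1, 0, N' + 1, by simp, by simp, by omega, by omega, .refl 0,
      hN.add (.refl 1)⟩
  · exact absurd hsign (by decide)
  · exact absurd hsign (by decide)
  · exact ⟨rfl, N + 1, 0, N' + 1, 0, by push_cast; omega, by push_cast; omega, by omega, by omega,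
      hN.add (.refl 1), .refl 0⟩

theorem visitedStates_subset (hN : ModEqFrom (Fintype.card Q + 1) (Fintype.card Q)! N N') (t : ℕ) :
    ∀ c c', Aligned (Fintype.card Q + 1) (Fintype.card Q)! N N' c c' →
      ((tstep δ N)^[t] c).1 ∈ visitedStates δ N' c' := by
  induction t using Nat.strong_induction_on with
  | _ t ih =>
  rintro ⟨q, x⟩ ⟨q', x'⟩ hc
  obtain rfl : q = q' := hc.1
  obtain ⟨hsym, hprof⟩ := hc.exitProfile_eq hδ
  set f := fun q => δ q (symAt N x)
  have hf' : (fun q => δ q (symAt N' x')) = f := by simp only [f, hsym]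
  by_cases hin : ∀ s < t, (freeRun f q s).2 ∈ window N x
  · rw [iterate_tstep_eq δ N hin]
    have hvis := statesUntilExit_subset_visitedStates δ N' q x'
    rw [hf'] at hvis
    have hstates : statesUntilExit f q (window N x) = statesUntilExit f q (window N' x') :=
      congrArg Prod.fst hprof
    exact hvis (hstates ▸ ⟨t, hin, rfl⟩)
  push Not at hin
  obtain ⟨s, hs, hout⟩ := hin
  obtain ⟨m, hms, hpre, hmout, he⟩ := exists_exitConfig_eq_some hout
  have hexit := congrArg Prod.snd hprof
  simp only [exitProfile, he, Option.map_some] at hexit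
  obtain ⟨e', he', hee'⟩ := Option.map_eq_some_iff.1 hexit.symm
  simp only [Prod.mk.injEq] at hee'
  obtain ⟨m', hpre', -, rfl⟩ := exitConfig_eq_some_iff.1 he'
  have hal := hc.exit hδ hN he (hf' ▸ he') hee'.2.symm
  have hm0 : 0 < m := Nat.pos_of_ne_zero fun h => hmout (by simp [h, freeRun_zero, window])
  have htape' := iterate_tstep_eq δ N' (q := q) (x := x') (t := m') (hf' ▸ hpre')
  rw [hf'] at htape'
  rw [show t = (t - m) + m by omega, Function.iterate_add_apply, iterate_tstep_eq δ N hpre]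
  refine visitedStates_iterate_subset δ N' (q, x') m' ?_
  rw [htape', hee'.1]
  exact ih (t - m) (by omega) _ _ hal

theorem visitedStates_eq (hN : ModEqFrom (Fintype.card Q + 1) (Fintype.card Q)! N N') {c c' : Q × ℤ}
    (hc : Aligned (Fintype.card Q + 1) (Fintype.card Q)! N N' c c') :
    visitedStates δ N c = visitedStates δ N' c' :=
  Subset.antisymm (by rintro _ ⟨t, rfl⟩; exact visitedStates_subset hδ hN t c c' hc)
    (by rintro _ ⟨t, rfl⟩; exact visitedStates_subset hδ hN.symm t c' c hc.symm)

theorem forall_not_trun_iff (hN : ModEqFrom (Fintype.card Q + 1) (Fintype.card Q)! N N') (B : Q → Prop) (s : Q) {p p' : ℕ}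
    (hp : ModEqFrom (Fintype.card Q + 1) (Fintype.card Q)! p p')
    (hq : ModEqFrom (Fintype.card Q + 1) (Fintype.card Q)! (N + 1 - p) (N' + 1 - p'))
    (hpN : p ≤ N + 1) (hpN' : p' ≤ N' + 1) :
    (∀ t, ¬ B (trun δ N s p t).1) ↔ ∀ t, ¬ B (trun δ N' s p' t).1 := by
  have hvis := visitedStates_eq hδ hN (c := (s, p)) (c' := (s, p'))
    ⟨rfl, p, N + 1 - p, p', N' + 1 - p', rfl, rfl, by omega, by omega, hp, hq⟩
  have hrange : ∀ (M : ℕ) (x : ℤ),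
      (∀ t, ¬ B (trun δ M s x t).1) ↔ ∀ q ∈ visitedStates δ M (s, x), ¬ B q := fun M x => by
    simp only [visitedStates, Set.forall_mem_range, trun]
  rw [hrange, hrange, hvis]

end Simulation

theorem amplitude_le [Fintype Q] {f : Q → Q × ℤ} (hf : ∀ q, |(f q).2| ≤ 1) (q : Q) :
    amplitude f q ≤ 2 * Fintype.card Q := by
  have hbound : ∀ y ∈ (Finset.range (Fintype.card Q + 1)).image fun t => (freeRun f q t).2,
      |y| ≤ Fintype.card Q := by
    simp only [Finset.mem_image, Finset.mem_range]
    rintro _ ⟨t, ht, rfl⟩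
    exact abs_freeRun_le_card hf q (by omega)
  unfold amplitude
  linarith [Finset.max'_le _ (by simp) _ fun y hy => (abs_le.1 (hbound y hy)).2,
    Finset.le_min' _ (by simp) _ fun y hy => (abs_le.1 (hbound y hy)).1]

end TwoWayUnary

theorem mem_iff_add_nsmul_mem {M : Type*} [AddMonoid M] {S D : Set M} {g : M}
    (h : ∀ v ∈ D, v + g ∈ D ∧ (v ∈ S ↔ v + g ∈ S)) (k : ℕ) {v : M} (hv : v ∈ D) :
    v ∈ S ↔ v + k • g ∈ S := by
  induction k generalizing v with
  | zero => simp
  | succ k ih =>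
    rw [succ_nsmul', ← add_assoc]
    exact (h v hv).2.trans (ih (h v hv).1)

theorem IsSemilinearSet.isSemilinearSet' {k : ℕ} {S : Set (Fin k → ℕ)} (h : IsSemilinearSet S) :
    IsSemilinearSet' S := by
  obtain ⟨L, hL, hlin, rfl⟩ := h
  obtain ⟨m, e, he⟩ := hL.fin_embedding
  refine ⟨m, e, fun i => ?_, by rw [← he, sUnion_range]⟩
  obtain ⟨a, t, ht, hat⟩ := hlin (e i) (he ▸ mem_range_self i)
  obtain ⟨n, b, rfl⟩ := ht.fin_embedding
  refine ⟨n, a, b, ?_⟩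
  rw [hat]
  ext v
  simp only [mem_vadd_set, SetLike.mem_coe, AddSubmonoid.mem_closure_range_iff_of_fintype,
    vadd_eq_add]
  constructor
  · rintro ⟨w, ⟨c, rfl⟩, rfl⟩
    exact ⟨c, rfl⟩
  · rintro ⟨c, rfl⟩
    exact ⟨_, ⟨c, rfl⟩, rfl⟩

section Periodic

variable {T P : ℕ}

def leftPeriod (T P : ℕ) (w : Fin 2 → ℕ) : Fin 2 → ℕ := if T ≤ w 1 then P • ![1, 1] else 0

def rightPeriod (T P : ℕ) (w : Fin 2 → ℕ) : Fin 2 → ℕ :=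
  if T ≤ w 0 + 1 - w 1 then P • ![1, 0] else 0

theorem mem_iff_add_periods {S : Set (Fin 2 → ℕ)}
    (hleft : ∀ v, v 1 ≤ v 0 + 1 → T ≤ v 1 → (v ∈ S ↔ v + P • ![1, 1] ∈ S))
    (hright : ∀ v, v 1 ≤ v 0 + 1 → T ≤ v 0 + 1 - v 1 → (v ∈ S ↔ v + P • ![1, 0] ∈ S))
    {w : Fin 2 → ℕ} (hw : w 1 ≤ w 0 + 1) (m n : ℕ) :
    w ∈ S ↔ w + (m • leftPeriod T P w + n • rightPeriod T P w) ∈ S := by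
  rw [← add_assoc]
  have hl : w ∈ S ↔ w + m • leftPeriod T P w ∈ S := by
    by_cases h : T ≤ w 1
    · simp only [leftPeriod, if_pos h]
      refine mem_iff_add_nsmul_mem (D := {v | v 1 ≤ v 0 + 1 ∧ T ≤ v 1})
        (fun v hv => ⟨?_, hleft v hv.1 hv.2⟩) m ⟨hw, h⟩
      simp only [mem_ofPred_eq] at hv
      simp only [mem_ofPred_eq, Pi.add_apply, Pi.smul_apply, smul_eq_mul]
      simp
      omega
    · simp [leftPeriod, h]
  refine hl.trans ?_
  by_cases h : T ≤ w 0 + 1 - w 1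
  · simp only [rightPeriod, if_pos h]
    refine mem_iff_add_nsmul_mem (D := {v | v 1 ≤ v 0 + 1 ∧ T ≤ v 0 + 1 - v 1})
      (fun v hv => ⟨?_, hright v hv.1 hv.2⟩) n ?_
    · simp only [mem_ofPred_eq] at hv
      simp only [mem_ofPred_eq, Pi.add_apply, Pi.smul_apply, smul_eq_mul]
      simp
      omega
    · have hl01 : leftPeriod T P w 0 = leftPeriod T P w 1 := by
        simp only [leftPeriod]
        split_ifs <;> simp
      simp only [mem_ofPred_eq, Pi.add_apply, Pi.smul_apply, smul_eq_mul, hl01]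
      omega
  · simp [rightPeriod, h]

theorem exists_add_periods_eq (hT : 0 < T) (hP : 0 < P) {v : Fin 2 → ℕ} (hv : v 1 ≤ v 0 + 1) :
    ∃ w : Fin 2 → ℕ, ∃ m n : ℕ, w 1 ≤ w 0 + 1 ∧ w 1 < T + P ∧ w 0 + 1 - w 1 < T + P ∧
      w + (m • leftPeriod T P w + n • rightPeriod T P w) = v := by
  have hm := Nat.div_add_mod' (v 1 - T) P
  have hn := Nat.div_add_mod' (v 0 + 1 - v 1 - T) P
  have hm' := Nat.mod_lt (v 1 - T) hP
  have hn' := Nat.mod_lt (v 0 + 1 - v 1 - T) hP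
  set m := (v 1 - T) / P
  set n := (v 0 + 1 - v 1 - T) / P
  set A := m * P with hA
  set B := n * P with hB
  let w : Fin 2 → ℕ := ![v 0 - (A + B), v 1 - A]
  have hw0 : w 0 = v 0 - (A + B) := rfl
  have hw1 : w 1 = v 1 - A := rfl
  have hlw : m • leftPeriod T P w = m • (P • ![1, 1]) := by
    by_cases h : T ≤ v 1
    · rw [leftPeriod, hw1, if_pos (by omega)]
    · simp [m, Nat.sub_eq_zero_of_le (not_le.1 h).le]
  have hrw : n • rightPeriod T P w = n • (P • ![1, 0]) := by
    by_cases h : T ≤ v 0 + 1 - v 1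
    · rw [rightPeriod, hw0, hw1, if_pos (by omega)]
    · simp [n, Nat.sub_eq_zero_of_le (not_le.1 h).le]
  refine ⟨w, m, n, by rw [hw0, hw1]; omega, by rw [hw1]; omega, by rw [hw0, hw1]; omega, ?_⟩
  rw [hlw, hrw]
  ext i
  fin_cases i <;> simp [w] <;> omega

theorem isSemilinearSet_of_periodic {S : Set (Fin 2 → ℕ)} (hT : 0 < T) (hP : 0 < P)
    (hS : ∀ v ∈ S, v 1 ≤ v 0 + 1)
    (hleft : ∀ v, v 1 ≤ v 0 + 1 → T ≤ v 1 → (v ∈ S ↔ v + P • ![1, 1] ∈ S))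
    (hright : ∀ v, v 1 ≤ v 0 + 1 → T ≤ v 0 + 1 - v 1 → (v ∈ S ↔ v + P • ![1, 0] ∈ S)) :
    IsSemilinearSet S := by
  let F := {w | w ∈ S ∧ w 1 < T + P ∧ w 0 + 1 - w 1 < T + P}
  have hF : F.Finite := by
    refine (Set.Finite.pi (t := fun _ : Fin 2 => Iio (2 * (T + P))) fun _ => finite_Iio _).subset ?_
    rintro w ⟨hw, h1, h2⟩ i
    have := hS w hw
    fin_cases i <;> simp <;> omega
  suffices S = ⋃ w ∈ F, w +ᵥ
      (AddSubmonoid.closure {leftPeriod T P w, rightPeriod T P w} : Set (Fin 2 → ℕ)) by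
    rw [this]
    exact IsSemilinearSet.biUnion hF fun w _ =>
      IsLinearSet.isSemilinearSet ⟨w, _, (finite_singleton _).insert _, rfl⟩
  ext v
  simp only [mem_iUnion, mem_vadd_set, SetLike.mem_coe, AddSubmonoid.mem_closure_pair,
    vadd_eq_add, exists_prop]
  constructor
  · intro hv
    obtain ⟨w, m, n, hw, hw1, hw0, rfl⟩ := exists_add_periods_eq hT hP (hS v hv)
    exact ⟨w, ⟨(mem_iff_add_periods hleft hright hw m n).2 hv, hw1, hw0⟩, _, ⟨m, n, rfl⟩, rfl⟩
  · rintro ⟨w, ⟨hwS, -, -⟩, _, ⟨m, n, rfl⟩, rfl⟩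
    exact (mem_iff_add_periods hleft hright (hS w hwS) m n).1 hwS

end Periodic

open TwoWayUnary in
/-- for a fixed state `s`, the set Mute of pairs `(N, p)` such that the
automaton, started in `(s, p)` on the tape `{0,…,N+1}` with `N` exceeding all
amplitudes, never enters a broadcasting state, is Presburger-definable (semilinear). -/
theorem stmt12 {Q : Type} [Fintype Q] (δ : Q → TapeSym → Q × ℤ)
    (hδ : ∀ q x, (δ q x).2 = -1 ∨ (δ q x).2 = 0 ∨ (δ q x).2 = 1)
    (B : Q → Prop) (s : Q) :
    IsSemilinearSet' {v : Fin 2 → ℕ |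
      (∀ q : Q, amplitude (fun q => δ q TapeSym.a) q < (v 0 : ℤ)) ∧
      v 1 ≤ v 0 + 1 ∧
      ∀ t : ℕ, ¬ B (trun δ (v 0) s (v 1) t).1} := by
  have hunit : ∀ q σ, |(δ q σ).2| ≤ 1 := fun q σ => by
    rcases hδ q σ with h | h | h <;> simp [h]
  have hamp : ∀ N : ℕ, 2 * Fintype.card Q < N → ∀ q, amplitude (fun q => δ q TapeSym.a) q < N :=
    fun N hN q => (amplitude_le (hunit · _) q).trans_lt (by exact_mod_cast hN)
  refine (isSemilinearSet_of_periodic (T := 2 * Fintype.card Q + 2) (P := (Fintype.card Q)!)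
    (by omega) (Nat.factorial_pos _) (fun v hv => hv.2.1) ?_ ?_).isSemilinearSet'
  · intro v hv hT
    have key := forall_not_trun_iff hunit (.self_add (by omega)) B s (.self_add (by omega))
      (by rw [show v 0 + (Fintype.card Q)! + 1 - (v 1 + (Fintype.card Q)!) = v 0 + 1 - v 1 by omega]
          exact .refl _) hv (by omega)
    simp only [mem_ofPred_eq, Pi.add_apply, Pi.smul_apply, smul_eq_mul]
    simp only [Matrix.cons_val_zero, Matrix.cons_val_one, mul_one, key]
    exact ⟨fun ⟨_, _, h⟩ => ⟨hamp _ (by omega), by omega, h⟩,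
      fun ⟨_, _, h⟩ => ⟨hamp _ (by omega), by omega, h⟩⟩
  · intro v hv hT
    have key := forall_not_trun_iff hunit (.self_add (by omega)) B s (.refl (v 1))
      (by rw [show v 0 + (Fintype.card Q)! + 1 - v 1 = v 0 + 1 - v 1 + (Fintype.card Q)! by omega]
          exact .self_add (by omega)) hv (by omega)
    simp only [mem_ofPred_eq, Pi.add_apply, Pi.smul_apply, smul_eq_mul]
    simp only [Matrix.cons_val_zero, Matrix.cons_val_one, mul_one, mul_zero, add_zero, key]
    exact ⟨fun ⟨_, _, h⟩ => ⟨hamp _ (by omega), by omega, h⟩,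
      fun ⟨_, _, h⟩ => ⟨hamp _ (by omega), by omega, h⟩⟩
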